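/- arXiv:math/0310361 — 3 statements merged into one kernel-verified Lean document; each statement's English description precedes it below -/
import Mathlib

section
/- Let O = k[[t]], F = k((t)), and consider two points (L,C,s) and (L',C',s') of the local stack of nondegenerate symmetric forms (rank 2 free O-modules with a symmetric form valued in a rank 1 free module, inducing injections L ↪ L*⊗C and L' ↪ L'*⊗C'). Then (L,C,s) and (L',C',s') are isomorphic if and only if the O-modules (L*⊗C)/L and (L'*⊗C')/L' are isomorphic. Consequently the isomorphism classes are in bijection with Φ = {(a,b) ∈ Z^2 : a ≥ b ≥ 0}. -/
set_option synthInstance.maxHeartbeats 400000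
set_option maxHeartbeats 800000

open PowerSeries Matrix

namespace LSC
variable {k : Type*} [Field k]

noncomputable def sqrtAux (c : k) (u : PowerSeries k) : ℕ → k
  | 0 => c
  | (n+1) => ((coeff (n+1)) u - ∑ i ∈ (Finset.range n).attach,
      sqrtAux c u (i.1+1) * sqrtAux c u (n - i.1)) / (2*c)
  decreasing_by
  · have := Finset.mem_range.mp i.2; omega
  · omega

lemma sqrtAux_spec (c : k) (u : PowerSeries k) (hc : c * c = constantCoeff u)
    (h2c : 2 * c ≠ 0) :
    (PowerSeries.mk (sqrtAux c u)) * (PowerSeries.mk (sqrtAux c u)) = u := by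
  ext n
  rw [coeff_mul, Finset.Nat.sum_antidiagonal_eq_sum_range_succ_mk]
  simp only [coeff_mk]
  cases n with
  | zero => simpa [sqrtAux] using hc
  | succ n =>
      rw [Finset.sum_range_succ, Finset.sum_range_succ']
      have hS : ∑ i ∈ (Finset.range n).attach,
          sqrtAux c u (i.1+1) * sqrtAux c u (n - i.1)
          = ∑ i ∈ Finset.range n, sqrtAux c u (i+1) * sqrtAux c u (n - i) :=
        Finset.sum_attach _ (fun i => sqrtAux c u (i+1) * sqrtAux c u (n - i))
      have hdef : sqrtAux c u (n+1)
          = ((coeff (n+1)) u - ∑ i ∈ Finset.range n,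
              sqrtAux c u (i+1) * sqrtAux c u (n - i)) / (2*c) := by
        rw [sqrtAux, hS]
      have e1 : ∀ i ∈ Finset.range n,
          sqrtAux c u (i+1) * sqrtAux c u (n + 1 - (i+1))
          = sqrtAux c u (i+1) * sqrtAux c u (n - i) := by
        intro i _; congr 2; omega
      rw [Finset.sum_congr rfl e1]
      have h0 : sqrtAux c u 0 = c := by rw [sqrtAux]
      rw [Nat.sub_zero, Nat.sub_self, h0, hdef]
      have hc0 : c ≠ 0 := right_ne_zero_of_mul h2c
      have h20 : (2:k) ≠ 0 := left_ne_zero_of_mul h2c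
      field_simp
      ring

lemma isUnit_iff_cc {f : PowerSeries k} : IsUnit f ↔ constantCoeff f ≠ 0 := by
  rw [PowerSeries.isUnit_iff_constantCoeff, isUnit_iff_ne_zero]

lemma exists_mul_self [IsAlgClosed k] (h2 : (2:k) ≠ 0) {u : PowerSeries k} (hu : IsUnit u) :
    ∃ s : PowerSeries k, s * s = u := by
  obtain ⟨c, hc⟩ := IsAlgClosed.exists_pow_nat_eq (constantCoeff u) (n := 2) (by norm_num)
  have hc' : c * c = constantCoeff u := by rw [← hc]; ring
  have hcc : constantCoeff u ≠ 0 := isUnit_iff_cc.mp hu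
  have hc0 : c ≠ 0 := by rintro rfl; simp at hc; exact hcc hc.symm
  exact ⟨_, sqrtAux_spec c u hc' (mul_ne_zero h2 hc0)⟩

lemma exists_X_pow_mul_unit {f : PowerSeries k} (hf : f ≠ 0) :
    ∃ (n : ℕ) (u : PowerSeries k), IsUnit u ∧ f = X ^ n * u :=
  ⟨_, _, isUnit_divided_by_X_pow_order hf,
    X_pow_order_mul_divXPowOrder.symm⟩

/-- Congruence with a unit scalar. -/
def Cong (B B' : Matrix (Fin 2) (Fin 2) (PowerSeries k)) : Prop :=
  ∃ (A : Matrix (Fin 2) (Fin 2) (PowerSeries k)) (ε : (PowerSeries k)ˣ),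
    IsUnit A.det ∧ (ε : PowerSeries k) • (A * B * Aᵀ) = B'

lemma cong_refl (B : Matrix (Fin 2) (Fin 2) (PowerSeries k)) : Cong B B :=
  ⟨1, 1, by simp, by simp⟩

lemma cong_trans {B₁ B₂ B₃ : Matrix (Fin 2) (Fin 2) (PowerSeries k)}
    (h : Cong B₁ B₂) (h' : Cong B₂ B₃) : Cong B₁ B₃ := by
  obtain ⟨A, ε, hA, hE⟩ := h
  obtain ⟨A', ε', hA', hE'⟩ := h'
  refine ⟨A' * A, ε' * ε, by simp [Matrix.det_mul, hA'.mul hA], ?_⟩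
  rw [← hE', ← hE]
  simp only [Matrix.transpose_mul, Matrix.smul_mul, Matrix.mul_smul, Units.val_mul,
    smul_smul, Matrix.mul_assoc]

lemma cong_symm {B₁ B₂ : Matrix (Fin 2) (Fin 2) (PowerSeries k)}
    (h : Cong B₁ B₂) : Cong B₂ B₁ := by
  obtain ⟨A, ε, hA, hE⟩ := h
  refine ⟨A⁻¹, ε⁻¹, (Matrix.isUnit_nonsing_inv_det A hA), ?_⟩
  rw [← hE]
  have h1 : A⁻¹ * A = 1 := Matrix.nonsing_inv_mul A hA
  have h2 : Aᵀ * A⁻¹ᵀ = 1 := by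
    rw [← Matrix.transpose_mul, h1, Matrix.transpose_one]
  calc ((ε⁻¹ : (PowerSeries k)ˣ) : PowerSeries k) • (A⁻¹ * ((ε : PowerSeries k) • (A * B₁ * Aᵀ)) * A⁻¹ᵀ)
      = (((ε⁻¹ * ε : (PowerSeries k)ˣ)) : PowerSeries k) •
        (A⁻¹ * A * B₁ * (Aᵀ * A⁻¹ᵀ)) := by
        simp only [Matrix.smul_mul, Matrix.mul_smul, smul_smul, Units.val_mul,
          Matrix.mul_assoc]
    _ = B₁ := by
        rw [inv_mul_cancel, Units.val_one, one_smul, Matrix.mul_assoc, h2,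
          Matrix.mul_one, h1, Matrix.one_mul]

lemma cong_swap_symm (p q r : PowerSeries k) : Cong !![p,q;q,r] !![r,q;q,p] := by
  refine ⟨!![0,1;1,0], 1, ?_, ?_⟩
  · simp [Matrix.det_fin_two_of]
  · rw [Units.val_one, one_smul]
    ext i j : 2
    fin_cases i <;> fin_cases j <;>
      simp [Matrix.mul_apply, Fin.sum_univ_two, Matrix.transpose_apply,
        Matrix.vecHead, Matrix.vecTail]

lemma cong_complete_square (p q r c : PowerSeries k) (h : q = c * p) :
    Cong !![p,q;q,r] (Matrix.diagonal ![p, r - c*q]) := by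
  refine ⟨!![1,0;-c,1], 1, ?_, ?_⟩
  · simp [Matrix.det_fin_two_of]
  · rw [Units.val_one, one_smul]
    subst h
    ext i j : 2
    fin_cases i <;> fin_cases j <;>
      simp [Matrix.mul_apply, Fin.sum_univ_two, Matrix.transpose_apply,
        Matrix.vecHead, Matrix.vecTail, Matrix.diagonal] <;> ring

lemma cong_shear (p q r : PowerSeries k) :
    Cong !![p,q;q,r] !![p+q+(q+r), q+r; q+r, r] := by
  refine ⟨!![1,1;0,1], 1, ?_, ?_⟩
  · simp [Matrix.det_fin_two_of]
  · rw [Units.val_one, one_smul]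
    ext i j : 2
    fin_cases i <;> fin_cases j <;>
      simp [Matrix.mul_apply, Fin.sum_univ_two, Matrix.transpose_apply,
        Matrix.vecHead, Matrix.vecTail] <;> ring

lemma cong_det_ne {B B' : Matrix (Fin 2) (Fin 2) (PowerSeries k)}
    (h : Cong B B') (hd : B.det ≠ 0) : B'.det ≠ 0 := by
  obtain ⟨A, ε, hA, hE⟩ := h
  rw [← hE, Matrix.det_smul, Matrix.det_mul, Matrix.det_mul, Matrix.det_transpose]
  exact mul_ne_zero (pow_ne_zero _ ε.ne_zero)
    (mul_ne_zero (mul_ne_zero hA.ne_zero hd) hA.ne_zero)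

/-- Step 1: any nondegenerate symmetric matrix is congruent to a diagonal one. -/
lemma exists_cong_diag (h2 : (2:k) ≠ 0) (B : Matrix (Fin 2) (Fin 2) (PowerSeries k))
    (hsym : B.IsSymm) : ∃ p q : PowerSeries k, Cong B (Matrix.diagonal ![p, q]) := by
  have h2O : IsUnit (2 : PowerSeries k) := by
    rw [isUnit_iff_cc]; simpa [map_ofNat] using h2
  have hB : B = !![B 0 0, B 0 1; B 0 1, B 1 1] := by
    conv_lhs => rw [Matrix.eta_fin_two B]
    rw [hsym.apply 0 1]
  set p := B 0 0; set q := B 0 1; set r := B 1 1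
  by_cases hpq : p ∣ q
  · obtain ⟨c, hc⟩ := hpq
    refine ⟨p, r - c*q, ?_⟩
    rw [hB]
    exact cong_complete_square p q r c (by rw [hc, mul_comm])
  by_cases hrq : r ∣ q
  · obtain ⟨c, hc⟩ := hrq
    refine ⟨r, p - c*q, ?_⟩
    rw [hB]
    exact cong_trans (cong_swap_symm p q r)
      (cong_complete_square r q p c (by rw [hc, mul_comm]))
  · -- q strictly divides p and r
    have hqp : q ∣ p := (ValuationRing.dvd_total p q).resolve_left hpq
    have hqr : q ∣ r := (ValuationRing.dvd_total r q).resolve_left hrq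
    obtain ⟨c₁, hc₁⟩ := hqp
    obtain ⟨c₂, hc₂⟩ := hqr
    have hcc1 : constantCoeff c₁ = 0 := by
      by_contra h
      obtain ⟨u, rfl⟩ := isUnit_iff_cc.mpr h
      exact hpq ⟨(↑u⁻¹ : PowerSeries k), by rw [hc₁, mul_assoc]; simp⟩
    have hcc2 : constantCoeff c₂ = 0 := by
      by_contra h
      obtain ⟨u, rfl⟩ := isUnit_iff_cc.mpr h
      exact hrq ⟨(↑u⁻¹ : PowerSeries k), by rw [hc₂, mul_assoc]; simp⟩
    have hw : IsUnit (c₁ + 2 + c₂) := by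
      rw [isUnit_iff_cc, map_add, map_add, hcc1, hcc2, zero_add, add_zero]
      simpa [map_ofNat] using h2
    obtain ⟨W, hW⟩ := hw
    have hpqr : p + q + (q + r) = q * (W : PowerSeries k) := by
      rw [hW, hc₁, hc₂]; ring
    have hkey : q + r = ((1+c₂) * (↑W⁻¹ : PowerSeries k)) * (p+q+(q+r)) := by
      rw [hpqr]
      calc q + r = q * (1+c₂) * ((↑W⁻¹ : PowerSeries k) * (W : PowerSeries k)) := by
            rw [Units.inv_mul, mul_one, hc₂]; ring
        _ = (1+c₂) * (↑W⁻¹ : PowerSeries k) * (q * (W : PowerSeries k)) := by ring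
    refine ⟨p+q+(q+r), r - ((1+c₂) * (↑W⁻¹ : PowerSeries k))*(q+r), cong_trans (B₂ := !![p+q+(q+r), q+r; q+r, r]) ?_ ?_⟩
    · rw [hB]; exact cong_shear p q r
    · exact cong_complete_square _ _ _ _ hkey

lemma diag2 (x y : PowerSeries k) : Matrix.diagonal ![x,y] = !![x,0;0,y] := by
  ext i j : 2
  fin_cases i <;> fin_cases j <;> simp [Matrix.diagonal]

lemma cong_diag_swap (x y : PowerSeries k) :
    Cong (Matrix.diagonal ![x,y]) (Matrix.diagonal ![y,x]) := by
  rw [diag2, diag2]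
  simpa using cong_swap_symm (q := 0) x y

lemma cong_diag_norm [IsAlgClosed k] (h2 : (2:k) ≠ 0) {p q : PowerSeries k}
    (hp : p ≠ 0) (hq : q ≠ 0) :
    ∃ a b : ℕ, b ≤ a ∧ Cong (Matrix.diagonal ![p,q]) (Matrix.diagonal ![X^a, X^b]) := by
  obtain ⟨m, u, hu, rfl⟩ := exists_X_pow_mul_unit hp
  obtain ⟨n, v, hv, rfl⟩ := exists_X_pow_mul_unit hq
  obtain ⟨U, rfl⟩ := hu
  obtain ⟨V, rfl⟩ := hv
  obtain ⟨s, hs⟩ := exists_mul_self h2 (U * V⁻¹).isUnit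
  have hsu : IsUnit s := isUnit_of_mul_isUnit_left (hs ▸ (U * V⁻¹).isUnit)
  have key : Cong (Matrix.diagonal ![X^m * (U : PowerSeries k), X^n * (V : PowerSeries k)])
      (Matrix.diagonal ![X^m, X^n]) := by
    refine ⟨Matrix.diagonal ![1, s], U⁻¹, ?_, ?_⟩
    · simpa [Matrix.det_diagonal, Fin.prod_univ_two] using hsu
    · have hmm : Matrix.diagonal ![(1:PowerSeries k), s] *
          Matrix.diagonal ![X^m * (U : PowerSeries k), X^n * (V : PowerSeries k)] *
          (Matrix.diagonal ![(1:PowerSeries k), s])ᵀ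
          = Matrix.diagonal ![X^m * (U : PowerSeries k),
              s * s * (X^n * (V : PowerSeries k))] := by
        ext i j : 2
        fin_cases i <;> fin_cases j <;>
          simp [Matrix.mul_apply, Fin.sum_univ_two, Matrix.transpose_apply,
            Matrix.vecHead, Matrix.vecTail, Matrix.diagonal] <;> ring
      rw [hmm]
      have h1 : ((↑U⁻¹ : PowerSeries k)) * (X^m * (U : PowerSeries k)) = X^m := by
        rw [mul_comm ((↑U⁻¹ : PowerSeries k)), mul_assoc, Units.mul_inv, mul_one]
      have h2' : ((↑U⁻¹ : PowerSeries k)) * (s * s * (X^n * (V : PowerSeries k))) = X^n := by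
        rw [hs]
        calc ((↑U⁻¹ : PowerSeries k)) * (((U * V⁻¹ : (PowerSeries k)ˣ) : PowerSeries k)
              * (X^n * (V : PowerSeries k)))
            = (((↑U⁻¹ : PowerSeries k)) * (U : PowerSeries k)) *
              (((↑V⁻¹ : PowerSeries k)) * (V : PowerSeries k)) * X^n := by
              rw [Units.val_mul]; ring
          _ = X^n := by rw [Units.inv_mul, Units.inv_mul, one_mul, one_mul]
      ext i j : 2
      fin_cases i <;> fin_cases j <;>
        simp [Matrix.diagonal, Matrix.smul_apply, smul_eq_mul, h1, h2']
  rcases le_total n m with hnm | hmn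
  · exact ⟨m, n, hnm, key⟩
  · exact ⟨n, m, hmn, cong_trans key (cong_diag_swap _ _)⟩

/-- Every nondegenerate symmetric matrix is congruent to `diag(X^a, X^b)`, `b ≤ a`. -/
lemma exists_cong_normal [IsAlgClosed k] (h2 : (2:k) ≠ 0)
    (B : Matrix (Fin 2) (Fin 2) (PowerSeries k)) (hsym : B.IsSymm) (hdet : B.det ≠ 0) :
    ∃ a b : ℕ, b ≤ a ∧ Cong B (Matrix.diagonal ![X^a, X^b]) := by
  obtain ⟨p, q, hc⟩ := exists_cong_diag h2 B hsym
  have hpq : p * q ≠ 0 := by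
    have := cong_det_ne hc hdet
    rwa [Matrix.det_diagonal, Fin.prod_univ_two] at this
  obtain ⟨a, b, hba, hc2⟩ := cong_diag_norm h2
    (left_ne_zero_of_mul hpq) (right_ne_zero_of_mul hpq)
  exact ⟨a, b, hba, cong_trans hc hc2⟩

/-- Congruent matrices have isomorphic cokernels. -/
lemma cong_coker {B B' : Matrix (Fin 2) (Fin 2) (PowerSeries k)} (h : Cong B B') :
    Nonempty (((Fin 2 → PowerSeries k) ⧸ LinearMap.range (Matrix.toLin' B))
      ≃ₗ[PowerSeries k]
      ((Fin 2 → PowerSeries k) ⧸ LinearMap.range (Matrix.toLin' B'))) := by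
  obtain ⟨A, ε, hA, hE⟩ := h
  set M : Matrix (Fin 2) (Fin 2) (PowerSeries k) := (ε : PowerSeries k) • A with hM
  have hMdet : IsUnit M.det := by
    rw [hM, Matrix.det_smul]
    exact (ε.isUnit.pow _).mul hA
  have hB' : B' = M * B * Aᵀ := by
    rw [hM, Matrix.smul_mul, Matrix.smul_mul, ← hE]
  have hAT : IsUnit Aᵀ.det := by rwa [Matrix.det_transpose]
  -- the equiv given by M
  have hMM : M * M⁻¹ = 1 := Matrix.mul_nonsing_inv M hMdet
  have hMM' : M⁻¹ * M = 1 := Matrix.nonsing_inv_mul M hMdet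
  let e : (Fin 2 → PowerSeries k) ≃ₗ[PowerSeries k] (Fin 2 → PowerSeries k) :=
    LinearEquiv.ofLinear (Matrix.toLin' M) (Matrix.toLin' M⁻¹)
      (by rw [← Matrix.toLin'_mul, hMM, Matrix.toLin'_one])
      (by rw [← Matrix.toLin'_mul, hMM', Matrix.toLin'_one])
  have hrange : (LinearMap.range (Matrix.toLin' B)).map (e : (Fin 2 → PowerSeries k) →ₗ[PowerSeries k] (Fin 2 → PowerSeries k))
      = LinearMap.range (Matrix.toLin' B') := by
    have he : (e : (Fin 2 → PowerSeries k) →ₗ[PowerSeries k] (Fin 2 → PowerSeries k))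
        = Matrix.toLin' M := rfl
    rw [he, hB', Matrix.mul_assoc, Matrix.toLin'_mul, LinearMap.range_comp]
    congr 1
    rw [Matrix.toLin'_mul, LinearMap.range_comp]
    have : LinearMap.range (Matrix.toLin' Aᵀ) = ⊤ := by
      rw [LinearMap.range_eq_top]
      intro v
      refine ⟨Matrix.toLin' Aᵀ⁻¹ v, ?_⟩
      rw [← Matrix.toLin'_mul_apply, Matrix.mul_nonsing_inv _ hAT, Matrix.toLin'_one,
        LinearMap.id_apply]
    rw [this, Submodule.map_top]
  exact ⟨Submodule.Quotient.equiv _ _ e hrange⟩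

section Coker
variable (k)

/-- truncation as a `k`-linear map -/
noncomputable def truncMap (a : ℕ) : PowerSeries k →ₗ[k] (Fin a → k) :=
  LinearMap.pi (fun i => PowerSeries.coeff i.1)

lemma truncMap_surj (a : ℕ) : Function.Surjective (truncMap k a) := by
  intro g
  refine ⟨PowerSeries.mk (fun n => if h : n < a then g ⟨n, h⟩ else 0), ?_⟩
  funext i
  simp [truncMap, LinearMap.pi_apply, PowerSeries.coeff_mk, i.2]

lemma truncMap_ker (a : ℕ) :
    LinearMap.ker (truncMap k a)
      = (Ideal.span {(X : PowerSeries k)^a}).restrictScalars k := by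
  ext f
  simp only [LinearMap.mem_ker, Submodule.restrictScalars_mem, Ideal.mem_span_singleton,
    truncMap]
  rw [PowerSeries.X_pow_dvd_iff]
  constructor
  · intro h m hm
    exact congrFun h ⟨m, hm⟩
  · intro h
    funext i
    exact h i.1 i.2

/-- `k[[X]]/(X^a)` is `a`-dimensional. -/
noncomputable def quotSpanEquiv (a : ℕ) :
    (PowerSeries k ⧸ (Ideal.span {(X : PowerSeries k)^a} : Ideal (PowerSeries k)))
      ≃ₗ[k] (Fin a → k) :=
  ((Submodule.Quotient.restrictScalarsEquiv k
      ((Ideal.span {(X : PowerSeries k)^a} : Ideal (PowerSeries k)) :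
        Submodule (PowerSeries k) (PowerSeries k))).symm ≪≫ₗ
    Submodule.quotEquivOfEq _ _ (truncMap_ker k a).symm) ≪≫ₗ
    (truncMap k a).quotKerEquivOfSurjective (truncMap_surj k a)

variable {k}

lemma ann_quot (I : Ideal (PowerSeries k)) :
    Module.annihilator (PowerSeries k) (PowerSeries k ⧸ I) = I := by
  ext r
  rw [Module.mem_annihilator]
  constructor
  · intro h
    have := h (Submodule.Quotient.mk (1 : PowerSeries k))
    rw [← Submodule.Quotient.mk_smul, smul_eq_mul, mul_one,
      Submodule.Quotient.mk_eq_zero] at this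
    exact this
  · intro hr m
    obtain ⟨x, rfl⟩ := Submodule.Quotient.mk_surjective I m
    rw [← Submodule.Quotient.mk_smul, smul_eq_mul, Submodule.Quotient.mk_eq_zero]
    exact I.mul_mem_right x hr

lemma range_diag (d : Fin 2 → PowerSeries k) :
    LinearMap.range (Matrix.toLin' (Matrix.diagonal d))
      = Submodule.pi Set.univ (fun i => (Ideal.span {d i} :
          Submodule (PowerSeries k) (PowerSeries k))) := by
  ext w
  constructor
  · rintro ⟨v, rfl⟩ i -
    rw [Matrix.toLin'_apply, Matrix.mulVec_diagonal]
    exact Ideal.mem_span_singleton.mpr (dvd_mul_right _ _)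
  · intro hw
    have h : ∀ i, d i ∣ w i := fun i =>
      Ideal.mem_span_singleton.mp (hw i (Set.mem_univ i))
    refine ⟨fun i => (h i).choose, ?_⟩
    funext i
    rw [Matrix.toLin'_apply, Matrix.mulVec_diagonal]
    exact ((h i).choose_spec).symm

variable (k) in
/-- cokernel of the diagonal matrix as a product of cyclic modules -/
noncomputable def cokEquiv (a b : ℕ) :
    ((Fin 2 → PowerSeries k) ⧸ LinearMap.range (Matrix.toLin'
        (Matrix.diagonal ![(X : PowerSeries k)^a, (X : PowerSeries k)^b])))
      ≃ₗ[PowerSeries k]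
    Π i : Fin 2, (PowerSeries k ⧸ (Ideal.span
        {(![(X : PowerSeries k)^a, (X : PowerSeries k)^b]) i} : Ideal (PowerSeries k))) :=
  (Submodule.quotEquivOfEq _ _ (range_diag _)) ≪≫ₗ Submodule.quotientPi _

lemma finrank_cok (a b : ℕ) :
    Module.finrank k ((Fin 2 → PowerSeries k) ⧸ LinearMap.range (Matrix.toLin'
        (Matrix.diagonal ![(X : PowerSeries k)^a, (X : PowerSeries k)^b]))) = a + b := by
  have e := (((cokEquiv k a b).restrictScalars k) ≪≫ₗ
      LinearEquiv.piFinTwo k (fun i => PowerSeries k ⧸ (Ideal.span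
        {(![(X : PowerSeries k)^a, (X : PowerSeries k)^b]) i} : Ideal (PowerSeries k)))) ≪≫ₗ
      LinearEquiv.prodCongr (quotSpanEquiv k a) (quotSpanEquiv k b)
  rw [e.finrank_eq, Module.finrank_prod, Module.finrank_fin_fun, Module.finrank_fin_fun]

lemma ann_cok (a b : ℕ) :
    Module.annihilator (PowerSeries k) ((Fin 2 → PowerSeries k) ⧸ LinearMap.range
        (Matrix.toLin' (Matrix.diagonal ![(X : PowerSeries k)^a, (X : PowerSeries k)^b])))
      = Ideal.span {(X : PowerSeries k)^(max a b)} := by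
  rw [(cokEquiv k a b).annihilator_eq]
  have hpi : Module.annihilator (PowerSeries k)
      (Π i : Fin 2, (PowerSeries k ⧸ (Ideal.span
        {(![(X : PowerSeries k)^a, (X : PowerSeries k)^b]) i} : Ideal (PowerSeries k))))
      = Ideal.span {(X : PowerSeries k)^a} ⊓ Ideal.span {(X : PowerSeries k)^b} := by
    ext r
    rw [Module.mem_annihilator, Submodule.mem_inf]
    constructor
    · intro h
      constructor
      · rw [← ann_quot (Ideal.span {(X : PowerSeries k)^a}), Module.mem_annihilator]
        intro m
        have := congrFun (h (Pi.single 0 m)) 0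
        exact this
      · rw [← ann_quot (Ideal.span {(X : PowerSeries k)^b}), Module.mem_annihilator]
        intro m
        have := congrFun (h (Pi.single 1 m)) 1
        exact this
    · rintro ⟨h1, h2⟩ m
      rw [← ann_quot (Ideal.span {(X : PowerSeries k)^a}), Module.mem_annihilator] at h1
      rw [← ann_quot (Ideal.span {(X : PowerSeries k)^b}), Module.mem_annihilator] at h2
      funext i
      fin_cases i
      · exact h1 (m 0)
      · exact h2 (m 1)
  rw [hpi]
  have hle : ∀ m n : ℕ, m ≤ n → (Ideal.span {(X : PowerSeries k)^n} : Ideal (PowerSeries k))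
      ≤ Ideal.span {(X : PowerSeries k)^m} :=
    fun m n h => Ideal.span_singleton_le_span_singleton.mpr (pow_dvd_pow _ h)
  rcases le_total a b with h | h
  · rw [max_eq_right h]
    exact le_antisymm inf_le_right (le_inf (hle a b h) le_rfl)
  · rw [max_eq_left h]
    exact le_antisymm inf_le_left (le_inf le_rfl (hle b a h))

end Coker

lemma X_pow_dvd_pow {m n : ℕ} (h : (X : PowerSeries k)^m ∣ (X : PowerSeries k)^n) :
    m ≤ n := by
  by_contra hc
  push_neg at hc
  have := (PowerSeries.X_pow_dvd_iff.mp h) n hc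
  rw [PowerSeries.coeff_X_pow] at this
  simp at this

lemma span_X_pow_inj {a a' : ℕ}
    (h : (Ideal.span {(X : PowerSeries k)^a} : Ideal (PowerSeries k))
      = Ideal.span {(X : PowerSeries k)^a'}) : a = a' := by
  have h1 : (X : PowerSeries k)^a' ∣ (X : PowerSeries k)^a :=
    Ideal.span_singleton_le_span_singleton.mp h.le
  have h2 : (X : PowerSeries k)^a ∣ (X : PowerSeries k)^a' :=
    Ideal.span_singleton_le_span_singleton.mp h.ge
  exact le_antisymm (X_pow_dvd_pow h2) (X_pow_dvd_pow h1)

lemma normal_unique {a b a' b' : ℕ} (hba : b ≤ a) (hb'a' : b' ≤ a')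
    (h : Nonempty (((Fin 2 → PowerSeries k) ⧸ LinearMap.range (Matrix.toLin'
        (Matrix.diagonal ![(X : PowerSeries k)^a, (X : PowerSeries k)^b])))
      ≃ₗ[PowerSeries k]
      ((Fin 2 → PowerSeries k) ⧸ LinearMap.range (Matrix.toLin'
        (Matrix.diagonal ![(X : PowerSeries k)^a', (X : PowerSeries k)^b']))))) :
    a = a' ∧ b = b' := by
  obtain ⟨e⟩ := h
  have hann := e.annihilator_eq
  rw [ann_cok, ann_cok, max_eq_left hba, max_eq_left hb'a'] at hann
  have ha : a = a' := span_X_pow_inj hann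
  have hrank := (e.restrictScalars k).finrank_eq
  rw [finrank_cok, finrank_cok] at hrank
  exact ⟨ha, by omega⟩

end LSC

/-- Classification of points of the local stack `S^loc` over `O = k[[t]]`
(`k` algebraically closed, char `≠ 2`).  Triples `(L, C, s)` (rank-2 free `L`,
rank-1 free `C`, symmetric form `s : Sym² L → C` inducing `L ↪ L* ⊗ C`) are
encoded by symmetric matrices `B` with `det B ≠ 0`; isomorphism of triples is
congruence `B ↦ ε • (A B Aᵀ)` with `A ∈ GL₂(O)`, `ε ∈ Oˣ`.  Claim: two triples are
isomorphic iff the `O`-modules `(L*⊗C)/L` and `(L'*⊗C')/L'` are isomorphic;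
consequently the isomorphism classes are classified by
`Φ = {(a,b) ∈ ℤ² : a ≥ b ≥ 0}` via `B ∼ diag(tᵃ, tᵇ)`. -/
theorem local_stack_classification (k : Type*) [Field k] [IsAlgClosed k]
    (h2 : (2 : k) ≠ 0) (B B' : Matrix (Fin 2) (Fin 2) (PowerSeries k))
    (hsym : B.IsSymm) (hdet : B.det ≠ 0) (hsym' : B'.IsSymm) (hdet' : B'.det ≠ 0) :
    ((∃ (A : Matrix (Fin 2) (Fin 2) (PowerSeries k)) (ε : (PowerSeries k)ˣ),
        IsUnit A.det ∧ (ε : PowerSeries k) • (A * B * Aᵀ) = B') ↔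
      Nonempty
        (((Fin 2 → PowerSeries k) ⧸ LinearMap.range (Matrix.toLin' B))
          ≃ₗ[PowerSeries k]
          ((Fin 2 → PowerSeries k) ⧸ LinearMap.range (Matrix.toLin' B')))) ∧
    (∃! p : ℕ × ℕ, p.2 ≤ p.1 ∧
      ∃ (A : Matrix (Fin 2) (Fin 2) (PowerSeries k)) (ε : (PowerSeries k)ˣ),
        IsUnit A.det ∧ (ε : PowerSeries k) • (A * B * Aᵀ) =
          Matrix.diagonal ![(X : PowerSeries k) ^ p.1, (X : PowerSeries k) ^ p.2]) := by
  obtain ⟨a, b, hba, hB⟩ := LSC.exists_cong_normal h2 B hsym hdet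
  constructor
  · constructor
    · intro h
      exact LSC.cong_coker h
    · intro h
      obtain ⟨a', b', hb'a', hB'⟩ := LSC.exists_cong_normal h2 B' hsym' hdet'
      obtain ⟨e1⟩ := LSC.cong_coker hB
      obtain ⟨e2⟩ := LSC.cong_coker hB'
      obtain ⟨e⟩ := h
      obtain ⟨rfl, rfl⟩ := LSC.normal_unique hba hb'a' ⟨e1.symm.trans (e.trans e2)⟩
      exact LSC.cong_trans hB (LSC.cong_symm hB')
  · refine ⟨(a, b), ⟨hba, hB⟩, ?_⟩
    rintro ⟨a', b'⟩ ⟨hb'a', hB'⟩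
    have hcc : LSC.Cong (Matrix.diagonal ![(X : PowerSeries k)^a', (X : PowerSeries k)^b'])
        (Matrix.diagonal ![(X : PowerSeries k)^a, (X : PowerSeries k)^b]) :=
      LSC.cong_trans (LSC.cong_symm hB') hB
    obtain ⟨e⟩ := LSC.cong_coker hcc
    have h := LSC.normal_unique hb'a' hba ⟨e⟩
    exact Prod.ext h.1 h.2
end

section
/- Let O = k[[t]], F = k((t)), F̃ = F ⊕ F with Õ = O ⊕ O (split case). Under the identification GL(F̃)/GL(Õ) ≅ GL_2(F)/GL_2(O) using the basis {(1,0),(0,1)}, so that F̃* is the diagonal torus, the diagonal-torus orbit corresponding to invariant m ≥ 0 contains the lattice generated by the columns of the matrix ((t^m, 1),(0,1)), i.e. the lattice O·(t^m, 0) + O·(1,1). -/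
set_option synthInstance.maxHeartbeats 1000000
set_option maxHeartbeats 1600000

open PowerSeries

/-- Split case of the orbit description of lattices.  Let `O = k[[t]]`,
`F = k((t))`, `F̃ = F ⊕ F` with `Õ = O ⊕ O`, and let the diagonal torus `F̃* = F* × F*`
act on `O`-lattices in `F²`.  Claim: the lattice `L = O·(tᵐ, 0) + O·(1, 1)`
(generated by the columns of the matrix `((tᵐ,1),(0,1))`) has invariant `m`: it is
an `O`-lattice (it spans `F²` over `F`); the smallest `Õ`-stable `O`-submodule
`B_ex` containing it is `O ⊕ O` (stability under `Õ` being stability under the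
componentwise idempotent projection `x ↦ (x₁, 0)`); and `length_O(B_ex/L) = m`:
there is a surjective `O`-linear map `B_ex → O/tᵐ` with kernel `L`.  Hence `L` lies
in the diagonal-torus orbit with invariant `m`. -/
theorem split_orbit_representative (k : Type*) [Field k] [IsAlgClosed k]
    (h2 : (2 : k) ≠ 0) (m : ℕ)
    (L Bex : Submodule (PowerSeries k) (LaurentSeries k × LaurentSeries k))
    (hL : L = Submodule.span (PowerSeries k)
      {((algebraMap (PowerSeries k) (LaurentSeries k) X ^ m, 0) :
          LaurentSeries k × LaurentSeries k), (1, 1)})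
    (hBex : Bex = Submodule.span (PowerSeries k)
      {((1, 0) : LaurentSeries k × LaurentSeries k), (0, 1)}) :
    Submodule.span (LaurentSeries k) (L : Set (LaurentSeries k × LaurentSeries k)) = ⊤ ∧
    L ≤ Bex ∧
    (∀ x ∈ Bex, ((x.1, 0) : LaurentSeries k × LaurentSeries k) ∈ Bex) ∧
    (∀ B : Submodule (PowerSeries k) (LaurentSeries k × LaurentSeries k), L ≤ B →
      (∀ x ∈ B, ((x.1, 0) : LaurentSeries k × LaurentSeries k) ∈ B) → Bex ≤ B) ∧
    (∃ φ : ↥Bex →ₗ[PowerSeries k]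
        (PowerSeries k ⧸ Ideal.span {(X : PowerSeries k) ^ m}),
      Function.Surjective φ ∧ LinearMap.ker φ = Submodule.comap Bex.subtype L) := by
  set a := algebraMap (PowerSeries k) (LaurentSeries k) with ha
  have hinj : Function.Injective a := IsFractionRing.injective _ _
  have hXm : (a X) ^ m = a (X ^ m) := (map_pow a X m).symm
  -- the embedding O × O → F × F
  set e : (PowerSeries k × PowerSeries k) →ₗ[PowerSeries k]
      (LaurentSeries k × LaurentSeries k) :=
    (Algebra.linearMap (PowerSeries k) (LaurentSeries k)).prodMap
      (Algebra.linearMap (PowerSeries k) (LaurentSeries k)) with he_def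
  have he_apply : ∀ p : PowerSeries k × PowerSeries k, e p = (a p.1, a p.2) := fun p => rfl
  have he : Function.Injective e := by
    rintro ⟨p1, p2⟩ ⟨q1, q2⟩ h
    rw [he_apply, he_apply, Prod.mk.injEq] at h
    exact Prod.ext (hinj h.1) (hinj h.2)
  have hsmul : ∀ (c : PowerSeries k) (u v : LaurentSeries k),
      c • ((u, v) : LaurentSeries k × LaurentSeries k) = (a c * u, a c * v) := by
    intro c u v
    simp [Prod.smul_mk, Algebra.smul_def, ha]
  have hrange : LinearMap.range e = Bex := by
    apply le_antisymm
    · rintro x ⟨⟨p, q⟩, rfl⟩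
      rw [hBex, Submodule.mem_span_pair]
      refine ⟨p, q, ?_⟩
      rw [hsmul, hsmul, he_apply]
      simp
    · rw [hBex, Submodule.span_le]
      rintro x (rfl | rfl)
      · exact ⟨(1, 0), by rw [he_apply]; simp⟩
      · exact ⟨(0, 1), by rw [he_apply]; simp⟩
  refine ⟨?_, ?_, ?_, ?_, ?_⟩
  · -- spans F²
    have hXm0 : ((a X ^ m, 0) : LaurentSeries k × LaurentSeries k) ∈ L :=
      hL ▸ Submodule.subset_span (by left; rfl)
    have h11 : ((1, 1) : LaurentSeries k × LaurentSeries k) ∈ L :=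
      hL ▸ Submodule.subset_span (by right; rfl)
    have haXm : (a X ^ m : LaurentSeries k) ≠ 0 := by
      rw [hXm]
      intro h
      exact pow_ne_zero m PowerSeries.X_ne_zero (hinj (h.trans (map_zero a).symm))
    have h10 : ((1, 0) : LaurentSeries k × LaurentSeries k) ∈
        Submodule.span (LaurentSeries k) (L : Set (LaurentSeries k × LaurentSeries k)) := by
      have := Submodule.smul_mem (Submodule.span (LaurentSeries k)
        (L : Set (LaurentSeries k × LaurentSeries k))) (a X ^ m)⁻¹
        (Submodule.subset_span hXm0)
      convert this using 1
      rw [Prod.smul_mk]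
      simp [inv_mul_cancel₀ haXm]
    have h01 : ((0, 1) : LaurentSeries k × LaurentSeries k) ∈
        Submodule.span (LaurentSeries k) (L : Set (LaurentSeries k × LaurentSeries k)) := by
      have := Submodule.sub_mem _ (Submodule.subset_span h11) h10
      convert this using 1
      simp [Prod.ext_iff]
    rw [eq_top_iff]
    rintro ⟨u, v⟩ -
    have := Submodule.add_mem _ (Submodule.smul_mem _ u h10) (Submodule.smul_mem _ v h01)
    convert this using 1
    simp [Prod.ext_iff]
  · -- L ≤ Bex
    rw [hL, hBex, Submodule.span_le]
    rintro x (rfl | rfl)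
    · have : ((X : PowerSeries k) ^ m) • ((1, 0) : LaurentSeries k × LaurentSeries k) ∈
          Submodule.span (PowerSeries k)
            {((1, 0) : LaurentSeries k × LaurentSeries k), (0, 1)} :=
        Submodule.smul_mem _ _ (Submodule.subset_span (by left; rfl))
      convert this using 1
      rw [hsmul]
      simp only [mul_one, mul_zero]
      rw [hXm]
      exact Iff.rfl
    · have : ((1, 0) : LaurentSeries k × LaurentSeries k) + (0, 1) ∈
          Submodule.span (PowerSeries k)
            {((1, 0) : LaurentSeries k × LaurentSeries k), (0, 1)} :=
        Submodule.add_mem _ (Submodule.subset_span (by left; rfl))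
          (Submodule.subset_span (by right; rfl))
      convert this using 1
      simp [Prod.ext_iff]
  · -- projection stability
    intro x hx
    rw [← hrange] at hx ⊢
    obtain ⟨⟨p, q⟩, rfl⟩ := hx
    exact ⟨(p, 0), by rw [he_apply, he_apply]; simp⟩
  · -- minimality
    intro B hLB hproj
    have h11 : ((1, 1) : LaurentSeries k × LaurentSeries k) ∈ B :=
      hLB (hL ▸ Submodule.subset_span (by right; rfl))
    have h10 : ((1, 0) : LaurentSeries k × LaurentSeries k) ∈ B := hproj _ h11
    have h01 : ((0, 1) : LaurentSeries k × LaurentSeries k) ∈ B := by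
      have := Submodule.sub_mem _ h11 h10
      convert this using 1
      simp [Prod.ext_iff]
    rw [hBex, Submodule.span_le]
    rintro x (rfl | rfl)
    · exact h10
    · exact h01
  · -- the length part
    set I : Ideal (PowerSeries k) := Ideal.span {(X : PowerSeries k) ^ m} with hI
    set ψ : (PowerSeries k × PowerSeries k) →ₗ[PowerSeries k]
        (PowerSeries k ⧸ I) :=
      I.mkQ.comp (LinearMap.fst (PowerSeries k) (PowerSeries k) (PowerSeries k)
        - LinearMap.snd (PowerSeries k) (PowerSeries k) (PowerSeries k)) with hψ
    have hψ_apply : ∀ p : PowerSeries k × PowerSeries k,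
        ψ p = Submodule.Quotient.mk (p.1 - p.2) := fun p => rfl
    set ε : ↥Bex ≃ₗ[PowerSeries k] (PowerSeries k × PowerSeries k) :=
      (LinearEquiv.ofEq Bex (LinearMap.range e) hrange.symm).trans
        (LinearEquiv.ofInjective e he).symm with hε
    have hεval : ∀ p : PowerSeries k × PowerSeries k,
        ((ε.symm p : ↥Bex) : LaurentSeries k × LaurentSeries k) = e p := by
      intro p; rfl
    have hval : ∀ x : ↥Bex, (x : LaurentSeries k × LaurentSeries k) = e (ε x) := by
      intro x
      conv_lhs => rw [← ε.symm_apply_apply x]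
      rw [hεval]
    refine ⟨ψ.comp ε.toLinearMap, ?_, ?_⟩
    · intro z
      obtain ⟨p, rfl⟩ := Submodule.mkQ_surjective I z
      refine ⟨ε.symm (p, 0), ?_⟩
      simp only [LinearMap.comp_apply, LinearEquiv.coe_coe, ε.apply_symm_apply]
      rw [hψ_apply]
      simp
    · ext x
      rw [LinearMap.mem_ker, Submodule.mem_comap, Submodule.subtype_apply, hval x,
        LinearMap.comp_apply, LinearEquiv.coe_coe, hψ_apply, Submodule.Quotient.mk_eq_zero,
        hI, Ideal.mem_span_singleton, hL, Submodule.mem_span_pair]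
      constructor
      · rintro ⟨c, hc⟩
        refine ⟨c, (ε x).2, ?_⟩
        rw [hsmul, hsmul, he_apply]
        have h1 : (ε x).1 = c * X ^ m + (ε x).2 := by
          rw [mul_comm]
          linear_combination hc
        simp only [Prod.mk_add_mk, Prod.mk.injEq]
        constructor
        · rw [h1, map_add, map_mul, ← hXm]
          ring
        · ring
      · rintro ⟨c, d, hcd⟩
        rw [hsmul, hsmul, he_apply, Prod.mk.injEq] at hcd
        obtain ⟨h1, h2⟩ := hcd
        have hd : d = (ε x).2 := by
          apply hinj
          simpa using h2
        have h1' : a (c * X ^ m + d) = a (ε x).1 := by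
          rw [map_add, map_mul, ← hXm]
          simpa using h1
        have := hinj h1'
        exact ⟨c, by rw [← this, hd]; ring⟩
end

section
/- (Split case of Proposition 17.) Let O = k[[t]], F = k((t)), and consider lattices in F ⊕ F with the diagonal torus action. Fix m ≥ 0 and the lattice L = t^m O·e_1 + O·(e_1 + e_2) of invariant m. For d ≥ 0, the set of O-sublattices L' ⊂ L with dim_k(L/L') = d and with invariant 0 (i.e. L' is itself of the form t^{a_1}O·e_1 ⊕ t^{a_2}O·e_2) is empty unless d ≥ m, and for d ≥ m it consists of exactly d - m + 1 points, namely the lattices t^{a_1}O e_1 ⊕ t^{a_2}O e_2 with a_1, a_2 ≥ m and a_1 + a_2 = d + m. -/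
set_option synthInstance.maxHeartbeats 1000000
set_option maxHeartbeats 1600000

open PowerSeries

section SplitWAux

variable {k : Type*} [Field k]

private lemma SW.inj : Function.Injective (algebraMap (PowerSeries k) (LaurentSeries k)) := by
  rw [LaurentSeries.coe_algebraMap]; exact HahnSeries.ofPowerSeries_injective

private lemma SW.uX_ne_zero : (algebraMap (PowerSeries k) (LaurentSeries k)) X ≠ 0 := by
  intro h
  exact PowerSeries.X_ne_zero (SW.inj (h.trans (map_zero _).symm))

private lemma SW.key_zpow {a : ℤ} {mm : ℕ} {p : PowerSeries k}
    (h : (algebraMap (PowerSeries k) (LaurentSeries k) X) ^ a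
      = algebraMap (PowerSeries k) (LaurentSeries k) p *
        (algebraMap (PowerSeries k) (LaurentSeries k) X) ^ (mm : ℤ)) :
    (mm : ℤ) ≤ a ∧ p = X ^ (a - mm).toNat := by
  set ι := algebraMap (PowerSeries k) (LaurentSeries k) with hι
  set u := ι X with hu
  have hu0 : u ≠ 0 := SW.uX_ne_zero
  have h2 : u ^ (a - (mm : ℤ)) = ι p := by
    rw [zpow_sub₀ hu0, h, mul_div_assoc, div_self (zpow_ne_zero _ hu0), mul_one]
  rcases le_or_gt (mm : ℤ) a with hle | hlt
  · refine ⟨hle, ?_⟩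
    have hn : a - (mm : ℤ) = ((a - mm).toNat : ℤ) := by omega
    rw [hn, zpow_natCast] at h2
    apply SW.inj
    rw [← h2, ← map_pow]
  · exfalso
    set n := (mm - a).toNat with hn
    have hn' : a - (mm : ℤ) = -(n : ℤ) := by omega
    have hnpos : n ≠ 0 := by omega
    have h3 : ι p * u ^ n = 1 := by
      rw [← h2, hn', ← zpow_natCast u n, ← zpow_add₀ hu0]
      norm_num
    have h4 : p * X ^ n = 1 := by
      apply SW.inj
      rw [map_mul, map_pow, map_one, h3]
    have := congrArg (PowerSeries.constantCoeff (R := k)) h4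
    rw [map_mul, map_pow, PowerSeries.constantCoeff_X, zero_pow hnpos, mul_zero, map_one] at this
    exact zero_ne_one this

private lemma SW.mem_L {m : ℕ} {x : LaurentSeries k × LaurentSeries k} :
    x ∈ Submodule.span (PowerSeries k)
      {((algebraMap (PowerSeries k) (LaurentSeries k) X ^ m, 0) :
          LaurentSeries k × LaurentSeries k), (1, 1)} ↔
    ∃ p q : PowerSeries k,
      x.1 = algebraMap (PowerSeries k) (LaurentSeries k) p *
          algebraMap (PowerSeries k) (LaurentSeries k) X ^ m +
          algebraMap (PowerSeries k) (LaurentSeries k) q ∧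
      x.2 = algebraMap (PowerSeries k) (LaurentSeries k) q := by
  rw [Submodule.mem_span_pair]
  constructor
  · rintro ⟨p, q, h⟩
    refine ⟨p, q, ?_, ?_⟩ <;>
    · rw [← h]
      simp [Prod.smul_mk, Algebra.smul_def, Prod.ext_iff]
  · rintro ⟨p, q, h1, h2⟩
    refine ⟨p, q, ?_⟩
    ext
    · simp [Algebra.smul_def, h1]
    · simp [Algebra.smul_def, h2]

private lemma SW.mem_N {a b : ℕ} {x : LaurentSeries k × LaurentSeries k} :
    x ∈ Submodule.span (PowerSeries k)
      {((algebraMap (PowerSeries k) (LaurentSeries k) X ^ a, 0) :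
          LaurentSeries k × LaurentSeries k),
        (0, algebraMap (PowerSeries k) (LaurentSeries k) X ^ b)} ↔
    ∃ p q : PowerSeries k,
      x.1 = algebraMap (PowerSeries k) (LaurentSeries k) p *
          algebraMap (PowerSeries k) (LaurentSeries k) X ^ a ∧
      x.2 = algebraMap (PowerSeries k) (LaurentSeries k) q *
          algebraMap (PowerSeries k) (LaurentSeries k) X ^ b := by
  rw [Submodule.mem_span_pair]
  constructor
  · rintro ⟨p, q, h⟩
    refine ⟨p, q, ?_, ?_⟩ <;>
    · rw [← h]
      simp [Prod.smul_mk, Algebra.smul_def, Prod.ext_iff]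
  · rintro ⟨p, q, h1, h2⟩
    refine ⟨p, q, ?_⟩
    ext
    · simp [Algebra.smul_def, h1]
    · simp [Algebra.smul_def, h2]

private noncomputable def SW.T (k : Type*) [Field k] (m : ℕ) :
    (PowerSeries k × PowerSeries k) →ₗ[PowerSeries k]
      (LaurentSeries k × LaurentSeries k) :=
  (LinearMap.toSpanSingleton (PowerSeries k) _
      ((algebraMap (PowerSeries k) (LaurentSeries k) X ^ m, 0) :
        LaurentSeries k × LaurentSeries k)).coprod
    (LinearMap.toSpanSingleton (PowerSeries k) _ (1, 1))

private lemma SW.T_apply (m : ℕ) (p q : PowerSeries k) :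
    SW.T k m (p, q) =
      (algebraMap (PowerSeries k) (LaurentSeries k) p *
          algebraMap (PowerSeries k) (LaurentSeries k) X ^ m +
          algebraMap (PowerSeries k) (LaurentSeries k) q,
        algebraMap (PowerSeries k) (LaurentSeries k) q) := by
  simp [SW.T, LinearMap.toSpanSingleton_apply, Prod.smul_mk, Algebra.smul_def, Prod.ext_iff]

private lemma SW.T_range (m : ℕ) :
    LinearMap.range (SW.T k m) = Submodule.span (PowerSeries k)
      {((algebraMap (PowerSeries k) (LaurentSeries k) X ^ m, 0) :
          LaurentSeries k × LaurentSeries k), (1, 1)} := by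
  rw [SW.T, LinearMap.range_coprod, ← LinearMap.span_singleton_eq_range,
    ← LinearMap.span_singleton_eq_range, ← Submodule.span_insert]

private lemma SW.T_inj (m : ℕ) : Function.Injective (SW.T k m) := by
  rw [← LinearMap.ker_eq_bot]
  ext ⟨p, q⟩
  simp only [LinearMap.mem_ker, Submodule.mem_bot, SW.T_apply, Prod.ext_iff, Prod.mk.injEq]
  constructor
  · rintro ⟨h1, h2⟩
    have hq : q = 0 := SW.inj (h2.trans (map_zero _).symm)
    subst hq
    rw [map_zero, add_zero, ← map_pow, ← map_mul] at h1
    have := SW.inj (h1.trans (map_zero _).symm)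
    rcases mul_eq_zero.mp this with h | h
    · exact ⟨h, rfl⟩
    · exact absurd h (pow_ne_zero _ PowerSeries.X_ne_zero)
  · rintro ⟨rfl, rfl⟩
    simp

private lemma SW.exists_phi (m a b : ℕ) (ha : m ≤ a) (hb : m ≤ b)
    (L : Submodule (PowerSeries k) (LaurentSeries k × LaurentSeries k))
    (hL : L = Submodule.span (PowerSeries k)
      {((algebraMap (PowerSeries k) (LaurentSeries k) X ^ m, 0) :
          LaurentSeries k × LaurentSeries k), (1, 1)}) :
    ∃ i j : ℕ, i + j + m = a + b ∧
      ∃ φ : ↥L →ₗ[PowerSeries k]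
          ((PowerSeries k ⧸ Ideal.span {(X : PowerSeries k) ^ i}) ×
            (PowerSeries k ⧸ Ideal.span {(X : PowerSeries k) ^ j})),
        Function.Surjective φ ∧ LinearMap.ker φ = Submodule.comap L.subtype
          (Submodule.span (PowerSeries k)
            {((algebraMap (PowerSeries k) (LaurentSeries k) X ^ a, 0) :
                LaurentSeries k × LaurentSeries k),
              (0, algebraMap (PowerSeries k) (LaurentSeries k) X ^ b)}) := by
  classical
  obtain ⟨e, he⟩ : ∃ e : (PowerSeries k × PowerSeries k) ≃ₗ[PowerSeries k] ↥L,
      ∀ pq : PowerSeries k × PowerSeries k,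
        ((e pq : ↥L) : LaurentSeries k × LaurentSeries k) = SW.T k m pq := by
    refine ⟨(LinearEquiv.ofInjective (SW.T k m) (SW.T_inj m)).trans
      (LinearEquiv.ofEq _ _ (by rw [SW.T_range, hL])), fun pq => ?_⟩
    rw [LinearEquiv.trans_apply, LinearEquiv.coe_ofEq_apply, LinearEquiv.ofInjective_apply]
  have he' : ∀ x : ↥L, SW.T k m (e.symm x) = (x : LaurentSeries k × LaurentSeries k) := by
    intro x; rw [← he, e.apply_symm_apply]
  -- choose (i, j, c) according to the two cases
  obtain ⟨i, j, c, hijm, hker⟩ :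
      ∃ (i j : ℕ) (c : PowerSeries k), i + j + m = a + b ∧
        (∀ p q : PowerSeries k,
          (p ∈ Ideal.span {(X : PowerSeries k) ^ i} ∧
            c * p + q ∈ Ideal.span {(X : PowerSeries k) ^ j}) ↔
          SW.T k m (p, q) ∈ Submodule.span (PowerSeries k)
            {((algebraMap (PowerSeries k) (LaurentSeries k) X ^ a, 0) :
                LaurentSeries k × LaurentSeries k),
              (0, algebraMap (PowerSeries k) (LaurentSeries k) X ^ b)}) := by
    rcases le_or_gt a b with hab | hab
    · obtain ⟨i, hi⟩ : ∃ i, i + m = a := ⟨a - m, by omega⟩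
      obtain ⟨s, hs⟩ : ∃ s, a + s = b := ⟨b - a, by omega⟩
      subst hi; subst hs
      refine ⟨i, i + m + s, 0, by omega, fun p q => ?_⟩
      rw [SW.T_apply, SW.mem_N]
      simp only [zero_mul, zero_add, Ideal.mem_span_singleton]
      constructor
      · rintro ⟨⟨p₀, rfl⟩, ⟨q₀, rfl⟩⟩
        refine ⟨p₀ + X ^ s * q₀, q₀, ?_, ?_⟩ <;>
        · simp only [← map_pow, ← map_mul, ← map_add]
          apply congrArg
          ring
      · rintro ⟨p', q', h1, h2⟩
        simp only [← map_pow, ← map_mul, ← map_add] at h1 h2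
        have h1' := SW.inj h1
        have h2' := SW.inj h2
        constructor
        · refine ⟨p' - X ^ s * q',
            mul_right_cancel₀ (pow_ne_zero m PowerSeries.X_ne_zero) ?_⟩
          linear_combination h1' - h2'
        · exact ⟨q', by linear_combination h2'⟩
    · obtain ⟨i, hi⟩ : ∃ i, i + m = b := ⟨b - m, by omega⟩
      obtain ⟨s, hs⟩ : ∃ s, b + s = a := ⟨a - b, by omega⟩
      subst hi; subst hs
      refine ⟨i, i + m + s, X ^ m, by omega, fun p q => ?_⟩
      rw [SW.T_apply, SW.mem_N]
      simp only [Ideal.mem_span_singleton]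
      constructor
      · rintro ⟨⟨p₀, rfl⟩, ⟨r, hr⟩⟩
        refine ⟨r, X ^ s * r - p₀, ?_, ?_⟩ <;>
        · simp only [← map_pow, ← map_mul, ← map_add, ← map_sub]
          apply congrArg
          linear_combination hr
      · rintro ⟨p', q', h1, h2⟩
        simp only [← map_pow, ← map_mul, ← map_add] at h1 h2
        have h1' := SW.inj h1
        have h2' := SW.inj h2
        constructor
        · refine ⟨p' * X ^ s - q',
            mul_right_cancel₀ (pow_ne_zero m PowerSeries.X_ne_zero) ?_⟩
          linear_combination h1' - h2'
        · exact ⟨p', by linear_combination h1'⟩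
  -- the linear map on coordinates
  set Φ : (PowerSeries k × PowerSeries k) →ₗ[PowerSeries k]
      ((PowerSeries k ⧸ Ideal.span {(X : PowerSeries k) ^ i}) ×
        (PowerSeries k ⧸ Ideal.span {(X : PowerSeries k) ^ j})) :=
    LinearMap.prod
      ((Submodule.mkQ _).comp (LinearMap.fst _ _ _))
      ((Submodule.mkQ _).comp (c • LinearMap.fst _ _ _ + LinearMap.snd _ _ _)) with hPhi
  have hPhi_apply : ∀ p q : PowerSeries k,
      Φ (p, q) = (Submodule.Quotient.mk p, Submodule.Quotient.mk (c * p + q)) := by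
    intro p q
    simp [hPhi, LinearMap.prod_apply, smul_eq_mul]
  have hPhi_surj : Function.Surjective Φ := by
    rintro ⟨α, β⟩
    obtain ⟨u, rfl⟩ := Submodule.Quotient.mk_surjective _ α
    obtain ⟨v, rfl⟩ := Submodule.Quotient.mk_surjective _ β
    exact ⟨(u, v - c * u), by rw [hPhi_apply]; congr 1; ring_nf⟩
  refine ⟨i, j, hijm, Φ.comp (e.symm : ↥L →ₗ[PowerSeries k] _), ?_, ?_⟩
  · exact hPhi_surj.comp e.symm.surjective
  · ext x
    have hx : SW.T k m (e.symm x) = (x : LaurentSeries k × LaurentSeries k) := he' x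
    simp only [LinearMap.mem_ker, LinearMap.comp_apply, LinearEquiv.coe_coe,
      Submodule.mem_comap, Submodule.coe_subtype]
    rcases hsymm : e.symm x with ⟨p, q⟩
    rw [hsymm] at hx
    rw [hPhi_apply, Prod.mk_eq_zero, Submodule.Quotient.mk_eq_zero,
      Submodule.Quotient.mk_eq_zero, ← hx]
    exact hker p q
private noncomputable def SW.quotEquiv (k : Type*) [Field k] (i : ℕ) :
    (PowerSeries k ⧸ Ideal.span {(X : PowerSeries k) ^ i}) ≃ₗ[k] (Fin i → k) := by
  classical
  letI C : PowerSeries k →ₗ[k] (Fin i → k) :=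
    LinearMap.pi fun n => PowerSeries.coeff (R := k) (n : ℕ)
  have hCs : Function.Surjective C := by
    intro v
    refine ⟨PowerSeries.mk fun n => if h : n < i then v ⟨n, h⟩ else 0, ?_⟩
    funext n
    simp [C, LinearMap.pi_apply, PowerSeries.coeff_mk, n.isLt]
  have hker : LinearMap.ker C =
      (Ideal.span {(X : PowerSeries k) ^ i} : Submodule (PowerSeries k) (PowerSeries k)).restrictScalars k := by
    ext f
    simp only [LinearMap.mem_ker, Submodule.restrictScalars_mem, Ideal.mem_span_singleton,
      funext_iff, LinearMap.pi_apply, C, Pi.zero_apply]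
    rw [PowerSeries.X_pow_dvd_iff]
    constructor
    · intro h n hn
      exact h ⟨n, hn⟩
    · intro h n
      exact h n n.isLt
  exact ((Submodule.Quotient.restrictScalarsEquiv k
      (Ideal.span {(X : PowerSeries k) ^ i} : Submodule (PowerSeries k) (PowerSeries k))).symm.trans
    (Submodule.quotEquivOfEq _ _ hker.symm)).trans (C.quotKerEquivOfSurjective hCs)

private lemma SW.finrank_quot (i : ℕ) :
    Module.finrank k (PowerSeries k ⧸ Ideal.span {(X : PowerSeries k) ^ i}) = i :=
  (SW.quotEquiv k i).finrank_eq.trans (Module.finrank_fin_fun k)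

private lemma SW.count_eq {i j i' j' : ℕ}
    (E : ((PowerSeries k ⧸ Ideal.span {(X : PowerSeries k) ^ i}) ×
        (PowerSeries k ⧸ Ideal.span {(X : PowerSeries k) ^ j})) ≃ₗ[PowerSeries k]
      ((PowerSeries k ⧸ Ideal.span {(X : PowerSeries k) ^ i'}) ×
        (PowerSeries k ⧸ Ideal.span {(X : PowerSeries k) ^ j'}))) :
    i + j = i' + j' := by
  classical
  haveI : Module.Finite k (PowerSeries k ⧸ Ideal.span {(X : PowerSeries k) ^ i}) :=
    Module.Finite.equiv (SW.quotEquiv k i).symm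
  haveI : Module.Finite k (PowerSeries k ⧸ Ideal.span {(X : PowerSeries k) ^ j}) :=
    Module.Finite.equiv (SW.quotEquiv k j).symm
  haveI : Module.Finite k (PowerSeries k ⧸ Ideal.span {(X : PowerSeries k) ^ i'}) :=
    Module.Finite.equiv (SW.quotEquiv k i').symm
  haveI : Module.Finite k (PowerSeries k ⧸ Ideal.span {(X : PowerSeries k) ^ j'}) :=
    Module.Finite.equiv (SW.quotEquiv k j').symm
  have Ek := E.restrictScalars k
  have h := Ek.finrank_eq
  rwa [Module.finrank_prod, Module.finrank_prod, SW.finrank_quot, SW.finrank_quot,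
    SW.finrank_quot, SW.finrank_quot] at h
private lemma SW.pow_dvd_le {a b : ℕ} (h : (X : PowerSeries k) ^ a ∣ X ^ b) : a ≤ b := by
  by_contra hc
  have := (PowerSeries.X_pow_dvd_iff.mp h) b (by omega)
  rw [PowerSeries.coeff_X_pow] at this
  simp at this

private lemma SW.N_inj {a b a' b' : ℕ}
    (h : Submodule.span (PowerSeries k)
        {((algebraMap (PowerSeries k) (LaurentSeries k) X ^ a, 0) :
            LaurentSeries k × LaurentSeries k),
          (0, algebraMap (PowerSeries k) (LaurentSeries k) X ^ b)} =
      Submodule.span (PowerSeries k)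
        {((algebraMap (PowerSeries k) (LaurentSeries k) X ^ a', 0) :
            LaurentSeries k × LaurentSeries k),
          (0, algebraMap (PowerSeries k) (LaurentSeries k) X ^ b')}) :
    a = a' ∧ b = b' := by
  have key : ∀ a b a' b' : ℕ,
      Submodule.span (PowerSeries k)
        {((algebraMap (PowerSeries k) (LaurentSeries k) X ^ a, 0) :
            LaurentSeries k × LaurentSeries k),
          (0, algebraMap (PowerSeries k) (LaurentSeries k) X ^ b)} ≤
      Submodule.span (PowerSeries k)
        {((algebraMap (PowerSeries k) (LaurentSeries k) X ^ a', 0) :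
            LaurentSeries k × LaurentSeries k),
          (0, algebraMap (PowerSeries k) (LaurentSeries k) X ^ b')} →
      a' ≤ a ∧ b' ≤ b := by
    intro a b a' b' hle
    constructor
    · have m1 := hle (Submodule.subset_span (Set.mem_insert _ _))
      obtain ⟨p, q, h1, h2⟩ := SW.mem_N.mp m1
      dsimp only at h1
      simp only [← map_pow, ← map_mul] at h1
      have := SW.inj h1
      exact SW.pow_dvd_le ⟨p, by linear_combination this⟩
    · have m2 := hle (Submodule.subset_span (Set.mem_insert_of_mem _ rfl))
      obtain ⟨p, q, h1, h2⟩ := SW.mem_N.mp m2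
      dsimp only at h2
      simp only [← map_pow, ← map_mul] at h2
      have := SW.inj h2
      exact SW.pow_dvd_le ⟨q, by linear_combination this⟩
  have h1 := key a b a' b' h.le
  have h2 := key a' b' a b h.ge
  omega

private lemma SW.N_le_L {m a b : ℕ} (ha : m ≤ a) (hb : m ≤ b) :
    Submodule.span (PowerSeries k)
      {((algebraMap (PowerSeries k) (LaurentSeries k) X ^ a, 0) :
          LaurentSeries k × LaurentSeries k),
        (0, algebraMap (PowerSeries k) (LaurentSeries k) X ^ b)} ≤
    Submodule.span (PowerSeries k)
      {((algebraMap (PowerSeries k) (LaurentSeries k) X ^ m, 0) :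
          LaurentSeries k × LaurentSeries k), (1, 1)} := by
  obtain ⟨s, rfl⟩ : ∃ s, a = s + m := ⟨a - m, by omega⟩
  obtain ⟨r, rfl⟩ : ∃ r, b = r + m := ⟨b - m, by omega⟩
  rw [Submodule.span_le]
  rintro x (rfl | rfl)
  · apply SW.mem_L.mpr
    refine ⟨X ^ s, 0, ?_, by simp⟩
    simp only [map_zero, add_zero, ← map_pow, ← map_mul]
    apply congrArg
    ring
  · apply SW.mem_L.mpr
    refine ⟨-(X ^ r), X ^ (r + m), ?_, by dsimp only; rw [map_pow]⟩
    dsimp only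
    have key : (-(X ^ r)) * X ^ m + X ^ (r + m) = (0 : PowerSeries k) := by ring
    rw [← map_pow, ← map_mul, ← map_add, key, map_zero]

end SplitWAux

/-- Split case of Proposition 17. -/
theorem split_Waldspurger_intersection (k : Type*) [Field k] [IsAlgClosed k]
    (h2 : (2 : k) ≠ 0) (m d : ℕ)
    (L : Submodule (PowerSeries k) (LaurentSeries k × LaurentSeries k))
    (hL : L = Submodule.span (PowerSeries k)
      {((algebraMap (PowerSeries k) (LaurentSeries k) X ^ m, 0) :
          LaurentSeries k × LaurentSeries k), (1, 1)})
    (S : Set (Submodule (PowerSeries k) (LaurentSeries k × LaurentSeries k)))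
    (hS : S = {L' | L' ≤ L ∧
      (∃ i j : ℕ, i + j = d ∧
        ∃ φ : ↥L →ₗ[PowerSeries k]
            ((PowerSeries k ⧸ Ideal.span {(X : PowerSeries k) ^ i}) ×
              (PowerSeries k ⧸ Ideal.span {(X : PowerSeries k) ^ j})),
          Function.Surjective φ ∧ LinearMap.ker φ = Submodule.comap L.subtype L') ∧
      (∃ a₁ a₂ : ℤ,
        L' = Submodule.span (PowerSeries k)
          {((algebraMap (PowerSeries k) (LaurentSeries k) X ^ a₁, 0) :
              LaurentSeries k × LaurentSeries k),
            (0, algebraMap (PowerSeries k) (LaurentSeries k) X ^ a₂)})}) :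
    (d < m → S = ∅) ∧
    (m ≤ d →
      S = {L' | ∃ a₁ a₂ : ℕ, m ≤ a₁ ∧ m ≤ a₂ ∧ a₁ + a₂ = d + m ∧
        L' = Submodule.span (PowerSeries k)
          {((algebraMap (PowerSeries k) (LaurentSeries k) X ^ a₁, 0) :
              LaurentSeries k × LaurentSeries k),
            (0, algebraMap (PowerSeries k) (LaurentSeries k) X ^ a₂)}} ∧
      S.ncard = d - m + 1) := by
  classical
  -- forward analysis of membership in S
  have hmain : ∀ L' ∈ S, ∃ a b : ℕ, m ≤ a ∧ m ≤ b ∧ a + b = d + m ∧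
      L' = Submodule.span (PowerSeries k)
        {((algebraMap (PowerSeries k) (LaurentSeries k) X ^ a, 0) :
            LaurentSeries k × LaurentSeries k),
          (0, algebraMap (PowerSeries k) (LaurentSeries k) X ^ b)} := by
    intro L' hmem
    rw [hS] at hmem
    obtain ⟨hle, ⟨i, j, hij, φ, hsurj, hkerφ⟩, z₁, z₂, hform⟩ := hmem
    -- first generator
    have mem1 : ((algebraMap (PowerSeries k) (LaurentSeries k) X ^ z₁, 0) :
        LaurentSeries k × LaurentSeries k) ∈ L := by
      apply hle
      rw [hform]
      exact Submodule.subset_span (Set.mem_insert _ _)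
    rw [hL] at mem1
    obtain ⟨p, q, h1, hq⟩ := SW.mem_L.mp mem1
    dsimp only at h1 hq
    have hq0 : (0 : PowerSeries k) = q := SW.inj ((map_zero _).trans hq)
    rw [← hq0, map_zero, add_zero,
      ← zpow_natCast (algebraMap (PowerSeries k) (LaurentSeries k) X) m] at h1
    have hz1 := (SW.key_zpow h1).1
    -- second generator
    have mem2 : (((0 : LaurentSeries k),
        algebraMap (PowerSeries k) (LaurentSeries k) X ^ z₂) :
        LaurentSeries k × LaurentSeries k) ∈ L := by
      apply hle
      rw [hform]
      exact Submodule.subset_span (Set.mem_insert_of_mem _ rfl)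
    rw [hL] at mem2
    obtain ⟨p', q', h1', h2'⟩ := SW.mem_L.mp mem2
    dsimp only at h1' h2'
    have h3 : algebraMap (PowerSeries k) (LaurentSeries k) X ^ z₂ =
        algebraMap (PowerSeries k) (LaurentSeries k) (-p') *
          algebraMap (PowerSeries k) (LaurentSeries k) X ^ ((m : ℕ) : ℤ) := by
      rw [map_neg, zpow_natCast, h2']
      linear_combination -h1'
    have hz2 := (SW.key_zpow h3).1
    -- convert to natural exponents
    set a := z₁.toNat with hadef
    set b := z₂.toNat with hbdef
    have hz1' : z₁ = (a : ℤ) := by omega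
    have hz2' : z₂ = (b : ℤ) := by omega
    rw [hz1', hz2', zpow_natCast, zpow_natCast] at hform
    have ham : m ≤ a := by omega
    have hbm : m ≤ b := by omega
    -- compare the two presentations of the quotient
    obtain ⟨i', j', hij', φ', hsurj', hker'⟩ := SW.exists_phi m a b ham hbm L hL
    have E := ((φ.quotKerEquivOfSurjective hsurj).symm.trans
      (Submodule.quotEquivOfEq _ _
        (by rw [hkerφ, hker', hform]))).trans (φ'.quotKerEquivOfSurjective hsurj')
    have hcount := SW.count_eq E
    exact ⟨a, b, ham, hbm, by omega, hform⟩
  -- backward: each lattice of the right shape is in S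
  have hback : ∀ a b : ℕ, m ≤ a → m ≤ b → a + b = d + m →
      Submodule.span (PowerSeries k)
        {((algebraMap (PowerSeries k) (LaurentSeries k) X ^ a, 0) :
            LaurentSeries k × LaurentSeries k),
          (0, algebraMap (PowerSeries k) (LaurentSeries k) X ^ b)} ∈ S := by
    intro a b ha hb hab
    rw [hS]
    refine ⟨by rw [hL]; exact SW.N_le_L ha hb, ?_, (a : ℤ), (b : ℤ), by
      rw [zpow_natCast, zpow_natCast]⟩
    obtain ⟨i, j, hij, φ, hsurj, hker⟩ := SW.exists_phi m a b ha hb L hL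
    exact ⟨i, j, by omega, φ, hsurj, hker⟩
  constructor
  · intro hdm
    rw [Set.eq_empty_iff_forall_notMem]
    intro L' hL'
    obtain ⟨a, b, ha, hb, hab, _⟩ := hmain L' hL'
    omega
  · intro hmd
    have hSeq : S = {L' | ∃ a₁ a₂ : ℕ, m ≤ a₁ ∧ m ≤ a₂ ∧ a₁ + a₂ = d + m ∧
        L' = Submodule.span (PowerSeries k)
          {((algebraMap (PowerSeries k) (LaurentSeries k) X ^ a₁, 0) :
              LaurentSeries k × LaurentSeries k),
            (0, algebraMap (PowerSeries k) (LaurentSeries k) X ^ a₂)}} := by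
      ext L'
      constructor
      · intro h
        exact hmain L' h
      · rintro ⟨a, b, ha, hb, hab, rfl⟩
        exact hback a b ha hb hab
    refine ⟨hSeq, ?_⟩
    have himg : S = (fun a : ℕ => Submodule.span (PowerSeries k)
        {((algebraMap (PowerSeries k) (LaurentSeries k) X ^ a, 0) :
            LaurentSeries k × LaurentSeries k),
          (0, algebraMap (PowerSeries k) (LaurentSeries k) X ^ (d + m - a))}) ''
        (Set.Icc m d) := by
      rw [hSeq]
      ext L'
      constructor
      · rintro ⟨a, b, ha, hb, hab, rfl⟩
        refine ⟨a, ⟨ha, by omega⟩, ?_⟩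
        have hba : d + m - a = b := by omega
        subst hba
        rfl
      · rintro ⟨a, ⟨ha1, ha2⟩, rfl⟩
        exact ⟨a, d + m - a, ha1, by omega, by omega, rfl⟩
    rw [himg, Set.ncard_image_of_injOn, ← Finset.coe_Icc, Set.ncard_coe_finset, Nat.card_Icc]
    · omega
    · intro x hx y hy hxy
      exact (SW.N_inj hxy).1
end
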